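/- Let ≿ be an IB preference on 𝓕 with nonconstant affine utility index u : X → ℝ (with 0 in the interior of u(X)) as in the maxmin representation. Define 𝒫* = {P ⊆ Δ : P is nonempty, convex and weak*-compact, and min_{p∈P} ∫ u(f) dp ≤ u(x_f) for all f ∈ 𝓕}, where x_f is a certainty equivalent of f. Then: (a) for every f ∈ 𝓕, max_{P∈𝒫*} min_{p∈P} ∫ u(f) dp = u(x_f), so 𝒫* satisfies the maxmin representation of ≿; and (b) every family 𝒫 of nonempty, convex, weak*-compact subsets of Δ satisfying the maxmin representation of ≿ with the same u is contained in 𝒫*; thus 𝒫* is the unique maximal such family. -/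

import Mathlib

open scoped Pointwise
open MeasureTheory

namespace Paper

variable {S V : Type*}

/-- An algebra of subsets of `S` (the events `Σ`). -/
structure IsSetAlg (𝓐 : Set (Set S)) : Prop where
  empty_mem : ∅ ∈ 𝓐
  compl_mem : ∀ A ∈ 𝓐, Aᶜ ∈ 𝓐
  union_mem : ∀ A ∈ 𝓐, ∀ B ∈ 𝓐, A ∪ B ∈ 𝓐

/-- `B₀(Σ)`: real-valued `Σ`-measurable simple functions. -/
def IsSimpleFn (𝓐 : Set (Set S)) (φ : S → ℝ) : Prop :=
  (Set.range φ).Finite ∧ ∀ t : ℝ, φ ⁻¹' {t} ∈ 𝓐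

open Classical in
/-- The integral of a simple function with respect to a finitely additive set function. -/
noncomputable def fint (p : Set S → ℝ) (φ : S → ℝ) : ℝ :=
  if h : (Set.range φ).Finite then ∑ t ∈ h.toFinset, t * p (φ ⁻¹' {t}) else 0

/-- `Δ`: the finitely additive probabilities on `Σ` (canonically extended by `0` off `Σ`). -/
def Δset (𝓐 : Set (Set S)) : Set (Set S → ℝ) :=
  {p | p Set.univ = 1 ∧ (∀ A ∈ 𝓐, 0 ≤ p A) ∧
    (∀ A ∈ 𝓐, ∀ B ∈ 𝓐, Disjoint A B → p (A ∪ B) = p A + p B) ∧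
    ∀ A : Set S, A ∉ 𝓐 → p A = 0}

/-- The weak* topology `σ(Δ, B₀(Σ))`, i.e. the topology induced by the evaluation maps
`p ↦ ∫ φ dp`, `φ ∈ B₀(Σ)`. -/
noncomputable def weakStar (𝓐 : Set (Set S)) : TopologicalSpace (Set S → ℝ) :=
  TopologicalSpace.induced
    (fun p => fun φ : {φ : S → ℝ // IsSimpleFn 𝓐 φ} => fint p φ.1)
    Pi.topologicalSpace

/-- `𝒞`: the weak*-lower semicontinuous convex functions `c : Δ → (-∞, ∞]`. -/
def Cscr (𝓐 : Set (Set S)) : Set ((Set S → ℝ) → EReal) :=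
  {c | (∀ p ∈ Δset 𝓐, ⊥ < c p) ∧
    (@LowerSemicontinuousOn (Set S → ℝ) EReal (weakStar 𝓐) _ c (Δset 𝓐)) ∧
    ∀ p ∈ Δset 𝓐, ∀ q ∈ Δset 𝓐, ∀ a b : ℝ, 0 ≤ a → 0 ≤ b → a + b = 1 →
      c (a • p + b • q) ≤ (a : EReal) * c p + (b : EReal) * c q}

/-- A subset `C ⊆ 𝒞` is grounded if `sup_{c ∈ C} min_{p ∈ Δ} c p = 0`. -/
def Grounded (𝓐 : Set (Set S)) (C : Set ((Set S → ℝ) → EReal)) : Prop :=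
  (⨆ c ∈ C, ⨅ p ∈ Δset 𝓐, c p) = 0

/-- `min_{p ∈ Δ} (∫ φ dp + c p)`. -/
noncomputable def minVal (𝓐 : Set (Set S)) (c : (Set S → ℝ) → EReal) (φ : S → ℝ) : EReal :=
  ⨅ p ∈ Δset 𝓐, ((fint p φ : EReal) + c p)

/-- `max_{q ∈ Δ} (∫ φ dq - b q)`. -/
noncomputable def maxVal (𝓐 : Set (Set S)) (b : (Set S → ℝ) → EReal) (φ : S → ℝ) : EReal :=
  ⨆ q ∈ Δset 𝓐, ((fint q φ : EReal) - b q)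

/-- `max_{c ∈ C} min_{p ∈ Δ} (∫ φ dp + c p)`. -/
noncomputable def maxminVal (𝓐 : Set (Set S)) (C : Set ((Set S → ℝ) → EReal))
    (φ : S → ℝ) : EReal :=
  ⨆ c ∈ C, minVal 𝓐 c φ

/-- `min_{b ∈ B} max_{q ∈ Δ} (∫ φ dq - b q)`. -/
noncomputable def minmaxVal (𝓐 : Set (Set S)) (B : Set ((Set S → ℝ) → EReal))
    (φ : S → ℝ) : EReal :=
  ⨅ b ∈ B, maxVal 𝓐 b φ

/-- `min_{p ∈ P} ∫ φ dp`. -/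
noncomputable def minPVal (P : Set (Set S → ℝ)) (φ : S → ℝ) : EReal :=
  ⨅ p ∈ P, (fint p φ : EReal)

/-- `max_{q ∈ Q} ∫ φ dq`. -/
noncomputable def maxQVal (Q : Set (Set S → ℝ)) (φ : S → ℝ) : EReal :=
  ⨆ q ∈ Q, (fint q φ : EReal)

/-- `max_{P ∈ Pfam} min_{p ∈ P} ∫ φ dp`. -/
noncomputable def maxminPVal (Pfam : Set (Set (Set S → ℝ))) (φ : S → ℝ) : EReal :=
  ⨆ P ∈ Pfam, minPVal P φ

/-- `min_{Q ∈ Qfam} max_{q ∈ Q} ∫ φ dq`. -/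
noncomputable def minmaxQVal (Qfam : Set (Set (Set S → ℝ))) (φ : S → ℝ) : EReal :=
  ⨅ Q ∈ Qfam, maxQVal Q φ

open Classical in
/-- The convex-analytic indicator `δ_P` of a set `P`. -/
noncomputable def ind (P : Set (Set S → ℝ)) : (Set S → ℝ) → EReal :=
  fun p => if p ∈ P then (0 : EReal) else ⊤

variable [AddCommGroup V] [Module ℝ V]

/-- `𝓕`: the simple acts, i.e. `Σ`-measurable maps `f : S → X` with finitely many values. -/
def Acts (𝓐 : Set (Set S)) (X : Set V) : Set (S → V) :=
  {f | (∀ s, f s ∈ X) ∧ (Set.range f).Finite ∧ ∀ v : V, f ⁻¹' {v} ∈ 𝓐}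

/-- The constant act with value `x`. -/
def constAct (x : V) : S → V := fun _ : S => x

/-- The mixture `α f + (1 - α) g` of two acts, defined statewise. -/
def mix (α : ℝ) (f g : S → V) : S → V := fun s => α • f s + (1 - α) • g s

/-- The statewise utility `u ∘ f` of an act. -/
def uAct (u : V → ℝ) (f : S → V) : S → ℝ := fun s => u (f s)

/-- `u : X → ℝ` is nonconstant and affine on `X`. -/
def IsNonconstAffine (X : Set V) (u : V → ℝ) : Prop :=
  (∀ x ∈ X, ∀ y ∈ X, ∀ t ∈ Set.Icc (0 : ℝ) 1,
      u (t • x + (1 - t) • y) = t * u x + (1 - t) * u y) ∧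
  ∃ x ∈ X, ∃ y ∈ X, u x ≠ u y

/-- A niveloidal preference: Axioms A1 (weak order), A2 (monotonicity), A3 (Archimedean)
and A4 (weak C-independence). -/
structure NiveloidalPref (𝓐 : Set (Set S)) (X : Set V)
    (R : (S → V) → (S → V) → Prop) : Prop where
  nontrivial : ∃ f ∈ Acts 𝓐 X, ∃ g ∈ Acts 𝓐 X, R f g ∧ ¬ R g f
  complete : ∀ f ∈ Acts 𝓐 X, ∀ g ∈ Acts 𝓐 X, R f g ∨ R g f
  transitive : ∀ f ∈ Acts 𝓐 X, ∀ g ∈ Acts 𝓐 X, ∀ h ∈ Acts 𝓐 X, R f g → R g h → R f h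
  monotone : ∀ f ∈ Acts 𝓐 X, ∀ g ∈ Acts 𝓐 X,
    (∀ s : S, R (constAct (f s)) (constAct (g s))) → R f g
  archimedean : ∀ f ∈ Acts 𝓐 X, ∀ g ∈ Acts 𝓐 X, ∀ h ∈ Acts 𝓐 X,
    (R f g ∧ ¬ R g f) → (R g h ∧ ¬ R h g) →
    ∃ α ∈ Set.Ioo (0 : ℝ) 1, ∃ β ∈ Set.Ioo (0 : ℝ) 1,
      (R (mix α f h) g ∧ ¬ R g (mix α f h)) ∧
      (R g (mix β f h) ∧ ¬ R (mix β f h) g)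
  weakCIndep : ∀ f ∈ Acts 𝓐 X, ∀ g ∈ Acts 𝓐 X, ∀ x ∈ X, ∀ y ∈ X,
    ∀ α ∈ Set.Ioo (0 : ℝ) 1,
    R (mix α f (constAct x)) (mix α g (constAct x)) →
    R (mix α f (constAct y)) (mix α g (constAct y))

/-- An invariant biseparable preference: Axioms A1 (weak order), A2 (monotonicity),
A3 (Archimedean) and A7 (C-independence). -/
structure IBPref (𝓐 : Set (Set S)) (X : Set V)
    (R : (S → V) → (S → V) → Prop) : Prop where
  nontrivial : ∃ f ∈ Acts 𝓐 X, ∃ g ∈ Acts 𝓐 X, R f g ∧ ¬ R g f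
  complete : ∀ f ∈ Acts 𝓐 X, ∀ g ∈ Acts 𝓐 X, R f g ∨ R g f
  transitive : ∀ f ∈ Acts 𝓐 X, ∀ g ∈ Acts 𝓐 X, ∀ h ∈ Acts 𝓐 X, R f g → R g h → R f h
  monotone : ∀ f ∈ Acts 𝓐 X, ∀ g ∈ Acts 𝓐 X,
    (∀ s : S, R (constAct (f s)) (constAct (g s))) → R f g
  archimedean : ∀ f ∈ Acts 𝓐 X, ∀ g ∈ Acts 𝓐 X, ∀ h ∈ Acts 𝓐 X,
    (R f g ∧ ¬ R g f) → (R g h ∧ ¬ R h g) →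
    ∃ α ∈ Set.Ioo (0 : ℝ) 1, ∃ β ∈ Set.Ioo (0 : ℝ) 1,
      (R (mix α f h) g ∧ ¬ R g (mix α f h)) ∧
      (R g (mix β f h) ∧ ¬ R (mix β f h) g)
  cIndep : ∀ f ∈ Acts 𝓐 X, ∀ g ∈ Acts 𝓐 X, ∀ x ∈ X, ∀ α ∈ Set.Ioo (0 : ℝ) 1,
    (R f g ↔ R (mix α f (constAct x)) (mix α g (constAct x)))

/-- Axiom A5 (uncertainty aversion). -/
def UncertaintyAverse (𝓐 : Set (Set S)) (X : Set V)
    (R : (S → V) → (S → V) → Prop) : Prop :=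
  ∀ f ∈ Acts 𝓐 X, ∀ g ∈ Acts 𝓐 X, ∀ α ∈ Set.Ioo (0 : ℝ) 1,
    R f g → R g f → R (mix α f g) f

/-- `xf` assigns to every act a certainty equivalent. -/
def IsCE (𝓐 : Set (Set S)) (X : Set V) (R : (S → V) → (S → V) → Prop)
    (xf : (S → V) → V) : Prop :=
  ∀ f ∈ Acts 𝓐 X, xf f ∈ X ∧ R f (constAct (xf f)) ∧ R (constAct (xf f)) f

/-- `C*`: the maximal candidate set of penalty functions. -/
def CstarOf (𝓐 : Set (Set S)) (X : Set V) (u : V → ℝ) (xf : (S → V) → V) :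
    Set ((Set S → ℝ) → EReal) :=
  {c | c ∈ Cscr 𝓐 ∧ ∀ f ∈ Acts 𝓐 X, minVal 𝓐 c (uAct u f) ≤ (u (xf f) : EReal)}

/-- `B*`: the maximal candidate set of reward functions. -/
def BstarOf (𝓐 : Set (Set S)) (X : Set V) (u : V → ℝ) (xf : (S → V) → V) :
    Set ((Set S → ℝ) → EReal) :=
  {b | b ∈ Cscr 𝓐 ∧ ∀ f ∈ Acts 𝓐 X, (u (xf f) : EReal) ≤ maxVal 𝓐 b (uAct u f)}

/-- `Pfam*`: the maximal family of prior sets (maxmin form). -/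
def PstarOf (𝓐 : Set (Set S)) (X : Set V) (u : V → ℝ) (xf : (S → V) → V) :
    Set (Set (Set S → ℝ)) :=
  {P | P ⊆ Δset 𝓐 ∧ P.Nonempty ∧ Convex ℝ P ∧ (@IsCompact _ (weakStar 𝓐) P) ∧
    ∀ f ∈ Acts 𝓐 X, minPVal P (uAct u f) ≤ (u (xf f) : EReal)}

/-- `Qfam*`: the maximal family of prior sets (minmax form). -/
def QstarOf (𝓐 : Set (Set S)) (X : Set V) (u : V → ℝ) (xf : (S → V) → V) :
    Set (Set (Set S → ℝ)) :=
  {Q | Q ⊆ Δset 𝓐 ∧ Q.Nonempty ∧ Convex ℝ Q ∧ (@IsCompact _ (weakStar 𝓐) Q) ∧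
    ∀ f ∈ Acts 𝓐 X, (u (xf f) : EReal) ≤ maxQVal Q (uAct u f)}

/-- `C` yields the maxmin representation of `R` with utility `u`. -/
def MaxminRep (𝓐 : Set (Set S)) (X : Set V) (R : (S → V) → (S → V) → Prop)
    (u : V → ℝ) (C : Set ((Set S → ℝ) → EReal)) : Prop :=
  ∀ f ∈ Acts 𝓐 X, ∀ g ∈ Acts 𝓐 X,
    (R f g ↔ maxminVal 𝓐 C (uAct u g) ≤ maxminVal 𝓐 C (uAct u f))

/-- All indicated maxima over `C` and minima over `Δ` are attained. -/
def MaxminAttained (𝓐 : Set (Set S)) (X : Set V) (u : V → ℝ)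
    (C : Set ((Set S → ℝ) → EReal)) : Prop :=
  ∀ f ∈ Acts 𝓐 X,
    (∀ c ∈ C, ∃ p ∈ Δset 𝓐,
      minVal 𝓐 c (uAct u f) = (fint p (uAct u f) : EReal) + c p) ∧
    ∃ c ∈ C, maxminVal 𝓐 C (uAct u f) = minVal 𝓐 c (uAct u f)

/-- `B` yields the minmax representation of `R` with utility `u`. -/
def MinmaxRep (𝓐 : Set (Set S)) (X : Set V) (R : (S → V) → (S → V) → Prop)
    (u : V → ℝ) (B : Set ((Set S → ℝ) → EReal)) : Prop :=
  ∀ f ∈ Acts 𝓐 X, ∀ g ∈ Acts 𝓐 X,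
    (R f g ↔ minmaxVal 𝓐 B (uAct u g) ≤ minmaxVal 𝓐 B (uAct u f))

/-- All indicated minima over `B` and maxima over `Δ` are attained. -/
def MinmaxAttained (𝓐 : Set (Set S)) (X : Set V) (u : V → ℝ)
    (B : Set ((Set S → ℝ) → EReal)) : Prop :=
  ∀ f ∈ Acts 𝓐 X,
    (∀ b ∈ B, ∃ q ∈ Δset 𝓐,
      maxVal 𝓐 b (uAct u f) = (fint q (uAct u f) : EReal) - b q) ∧
    ∃ b ∈ B, minmaxVal 𝓐 B (uAct u f) = maxVal 𝓐 b (uAct u f)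

/-- A family of nonempty, convex, weak*-compact subsets of `Δ`. -/
def IsPriorFamily (𝓐 : Set (Set S)) (Pfam : Set (Set (Set S → ℝ))) : Prop :=
  Pfam.Nonempty ∧ ∀ P ∈ Pfam,
    P ⊆ Δset 𝓐 ∧ P.Nonempty ∧ Convex ℝ P ∧ (@IsCompact _ (weakStar 𝓐) P)

/-- `Pfam` yields the maxmin representation of `R` with utility `u`. -/
def PRep (𝓐 : Set (Set S)) (X : Set V) (R : (S → V) → (S → V) → Prop)
    (u : V → ℝ) (Pfam : Set (Set (Set S → ℝ))) : Prop :=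
  ∀ f ∈ Acts 𝓐 X, ∀ g ∈ Acts 𝓐 X,
    (R f g ↔ maxminPVal Pfam (uAct u g) ≤ maxminPVal Pfam (uAct u f))

/-- All indicated maxima over `Pfam` and minima over `P` are attained. -/
def PAttained (𝓐 : Set (Set S)) (X : Set V) (u : V → ℝ)
    (Pfam : Set (Set (Set S → ℝ))) : Prop :=
  ∀ f ∈ Acts 𝓐 X,
    (∀ P ∈ Pfam, ∃ p ∈ P, minPVal P (uAct u f) = (fint p (uAct u f) : EReal)) ∧
    ∃ P ∈ Pfam, maxminPVal Pfam (uAct u f) = minPVal P (uAct u f)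

/-- `Qfam` yields the minmax representation of `R` with utility `u`. -/
def QRep (𝓐 : Set (Set S)) (X : Set V) (R : (S → V) → (S → V) → Prop)
    (u : V → ℝ) (Qfam : Set (Set (Set S → ℝ))) : Prop :=
  ∀ f ∈ Acts 𝓐 X, ∀ g ∈ Acts 𝓐 X,
    (R f g ↔ minmaxQVal Qfam (uAct u g) ≤ minmaxQVal Qfam (uAct u f))

/-- All indicated minima over `Qfam` and maxima over `Q` are attained. -/
def QAttained (𝓐 : Set (Set S)) (X : Set V) (u : V → ℝ)
    (Qfam : Set (Set (Set S → ℝ))) : Prop :=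
  ∀ f ∈ Acts 𝓐 X,
    (∀ Q ∈ Qfam, ∃ q ∈ Q, maxQVal Q (uAct u f) = (fint q (uAct u f) : EReal)) ∧
    ∃ Q ∈ Qfam, minmaxQVal Qfam (uAct u f) = maxQVal Q (uAct u f)

/-- `c₁ ≈_u c₂`: `c₁` and `c₂` induce the same variational functional on `B₀(Σ, u(X))`. -/
def ApproxEq (𝓐 : Set (Set S)) (X : Set V) (u : V → ℝ)
    (c₁ c₂ : (Set S → ℝ) → EReal) : Prop :=
  ∀ φ : S → ℝ, IsSimpleFn 𝓐 φ → (∀ s, φ s ∈ u '' X) →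
    minVal 𝓐 c₁ φ = minVal 𝓐 c₂ φ

/-- `R₁` is more ambiguity averse than `R₂`. -/
def MoreAmbiguityAverse (𝓐 : Set (Set S)) (X : Set V)
    (R₁ R₂ : (S → V) → (S → V) → Prop) : Prop :=
  ∀ f ∈ Acts 𝓐 X, ∀ x ∈ X, R₂ (constAct x) f → R₁ (constAct x) f

/-- `u₁` and `u₂` are positive affine transformations of each other on `X`. -/
def CardEquiv (X : Set V) (u₁ u₂ : V → ℝ) : Prop :=
  ∃ a b : ℝ, 0 < a ∧ ∀ x ∈ X, u₂ x = a * u₁ x + b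

/-- A capacity on `(S, Σ)`. -/
def IsCapacity (𝓐 : Set (Set S)) (π : Set S → ℝ) : Prop :=
  π ∅ = 0 ∧ π Set.univ = 1 ∧ ∀ A ∈ 𝓐, ∀ B ∈ 𝓐, A ⊆ B → π A ≤ π B

/-- The Choquet integral of a (simple) function against a capacity. -/
noncomputable def choquet (π : Set S → ℝ) (φ : S → ℝ) : ℝ :=
  (∫ t in Set.Ioi (0 : ℝ), π {s | t ≤ φ s}) +
    ∫ t in Set.Iio (0 : ℝ), (π {s | t ≤ φ s} - 1)

end Paper

namespace Paper

/-! Any representing family gives an act `f` the value `u (xf f)`: `f ∼ xf f`, and the maxmin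
value of a constant act is its utility. Hence each of its prior sets lies in `𝒫*`, while members
of `𝒫*` never exceed `u (xf f)`; the set attaining the maximum in the given family therefore
attains it in `𝒫*` as well, so `𝒫*` has the same values and represents `≿`. -/

open Topology

variable {S V : Type*}

theorem IsSetAlg.isSetAlgebra {𝓐 : Set (Set S)} (hA : IsSetAlg 𝓐) : IsSetAlgebra 𝓐 where
  empty_mem := hA.empty_mem
  compl_mem := fun s hs => hA.compl_mem s hs
  union_mem := fun s t hs ht => hA.union_mem s hs t ht

theorem constAct_mem_acts {𝓐 : Set (Set S)} (hA : IsSetAlg 𝓐) {X : Set V} {x : V}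
    (hx : x ∈ X) : (constAct x : S → V) ∈ Acts 𝓐 X := by
  classical
  refine ⟨fun _ => hx, Set.finite_range_const, fun v => ?_⟩
  change (fun _ : S => x) ⁻¹' {v} ∈ 𝓐
  rw [Set.preimage_const]
  split_ifs
  exacts [hA.isSetAlgebra.univ_mem, hA.empty_mem]

theorem isSimpleFn_uAct {𝓐 : Set (Set S)} (hA : IsSetAlg 𝓐) {X : Set V} (u : V → ℝ)
    {f : S → V} (hf : f ∈ Acts 𝓐 X) : IsSimpleFn 𝓐 (uAct u f) := by
  classical
  obtain ⟨-, hfin, hmeas⟩ := hf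
  refine ⟨(hfin.image u).subset (Set.range_comp u f).le, fun t => ?_⟩
  have hpre : uAct u f ⁻¹' {t} = ⋃ v ∈ hfin.toFinset.filter (u · = t), f ⁻¹' {v} := by
    ext s
    simp [uAct]
  rw [hpre]
  exact hA.isSetAlgebra.biUnion_mem _ fun v _ => hmeas v

theorem continuous_fint {𝓐 : Set (Set S)} {φ : S → ℝ} (hφ : IsSimpleFn 𝓐 φ) :
    Continuous[weakStar 𝓐, _] fun p => fint p φ := by
  let _ := weakStar 𝓐
  have hfints : Continuous fun p (ψ : {ψ // IsSimpleFn 𝓐 ψ}) => fint p ψ.1 :=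
    continuous_induced_dom
  exact (continuous_apply ⟨φ, hφ⟩).comp hfints

theorem exists_minPVal_eq_fint {𝓐 : Set (Set S)} {φ : S → ℝ} (hφ : IsSimpleFn 𝓐 φ)
    {P : Set (Set S → ℝ)} (hPc : @IsCompact _ (weakStar 𝓐) P) (hPne : P.Nonempty) :
    ∃ p ∈ P, minPVal P φ = (fint p φ : EReal) := by
  let _ := weakStar 𝓐
  obtain ⟨p₀, hp₀, hmin⟩ := hPc.exists_isMinOn hPne (continuous_fint hφ).continuousOn
  exact ⟨p₀, hp₀, le_antisymm (iInf₂_le p₀ hp₀)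
    (le_iInf₂ fun p hp => EReal.coe_le_coe_iff.2 (hmin hp))⟩

theorem fint_const [Nonempty S] {p : Set S → ℝ} (hp : p Set.univ = 1) (r : ℝ) :
    fint p (fun _ : S => r) = r := by
  classical
  have hfin : (Set.range fun _ : S => r).Finite := Set.finite_range_const
  rw [fint, dif_pos hfin, show hfin.toFinset = {r} by simp, Finset.sum_singleton,
    Set.preimage_const_of_mem (Set.mem_singleton r), hp, mul_one]

theorem maxminPVal_const [Nonempty S] {𝓐 : Set (Set S)} {Pfam : Set (Set (Set S → ℝ))}
    (hfam : IsPriorFamily 𝓐 Pfam) (r : ℝ) :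
    maxminPVal Pfam (fun _ : S => r) = r := by
  have hmin : ∀ P ∈ Pfam, minPVal P (fun _ : S => r) = r := fun P hP => by
    obtain ⟨hsub, hne, -⟩ := hfam.2 P hP
    exact (biInf_congr fun p hp => congrArg _ (fint_const (hsub hp).1 r)).trans
      (biInf_const hne)
  exact (biSup_congr hmin).trans (biSup_const hfam.1)

section Representation

variable {𝓐 : Set (Set S)} {X : Set V} {R : (S → V) → (S → V) → Prop}
  {u : V → ℝ} {Pfam : Set (Set (Set S → ℝ))} {xf : (S → V) → V}

theorem PRep.maxminPVal_eq [Nonempty S] (hrep : PRep 𝓐 X R u Pfam) (hA : IsSetAlg 𝓐)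
    (hfam : IsPriorFamily 𝓐 Pfam) (hxf : IsCE 𝓐 X R xf) {f : S → V} (hf : f ∈ Acts 𝓐 X) :
    maxminPVal Pfam (uAct u f) = u (xf f) := by
  obtain ⟨hxX, hfx, hxf'⟩ := hxf f hf
  have hx : constAct (xf f) ∈ Acts 𝓐 X := constAct_mem_acts hA hxX
  have hconst : maxminPVal Pfam (uAct u (constAct (xf f))) = u (xf f) :=
    maxminPVal_const hfam (u (xf f))
  have hle := (hrep _ hx f hf).1 hxf'
  have hge := (hrep f hf _ hx).1 hfx
  rw [hconst] at hle hge
  exact le_antisymm hle hge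

theorem PRep.subset_PstarOf [Nonempty S] (hrep : PRep 𝓐 X R u Pfam) (hA : IsSetAlg 𝓐)
    (hfam : IsPriorFamily 𝓐 Pfam) (hxf : IsCE 𝓐 X R xf) : Pfam ⊆ PstarOf 𝓐 X u xf :=
  fun P hP => by
    obtain ⟨hsub, hne, hconv, hcpt⟩ := hfam.2 P hP
    refine ⟨hsub, hne, hconv, hcpt, fun f hf => ?_⟩
    rw [← hrep.maxminPVal_eq hA hfam hxf hf]
    exact le_iSup₂ (f := fun P _ => minPVal P (uAct u f)) P hP

theorem maxminPVal_PstarOf [Nonempty S] (hrep : PRep 𝓐 X R u Pfam) (hA : IsSetAlg 𝓐)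
    (hfam : IsPriorFamily 𝓐 Pfam) (hatt : PAttained 𝓐 X u Pfam) (hxf : IsCE 𝓐 X R xf)
    {f : S → V} (hf : f ∈ Acts 𝓐 X) :
    maxminPVal (PstarOf 𝓐 X u xf) (uAct u f) = u (xf f) := by
  obtain ⟨P, hP, hPval⟩ := (hatt f hf).2
  refine le_antisymm (iSup₂_le fun P hP => hP.2.2.2.2 f hf) ?_
  calc (u (xf f) : EReal) = minPVal P (uAct u f) := by
        rw [← hPval, hrep.maxminPVal_eq hA hfam hxf hf]
    _ ≤ maxminPVal (PstarOf 𝓐 X u xf) (uAct u f) :=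
        le_iSup₂ (f := fun P _ => minPVal P (uAct u f)) P (hrep.subset_PstarOf hA hfam hxf hP)

theorem pAttained_PstarOf [Nonempty S] (hrep : PRep 𝓐 X R u Pfam) (hA : IsSetAlg 𝓐)
    (hfam : IsPriorFamily 𝓐 Pfam) (hatt : PAttained 𝓐 X u Pfam) (hxf : IsCE 𝓐 X R xf) :
    PAttained 𝓐 X u (PstarOf 𝓐 X u xf) := by
  intro f hf
  refine ⟨fun P hP => exists_minPVal_eq_fint (isSimpleFn_uAct hA u hf) hP.2.2.2.1 hP.2.1, ?_⟩
  obtain ⟨P, hP, hPval⟩ := (hatt f hf).2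
  refine ⟨P, hrep.subset_PstarOf hA hfam hxf hP, ?_⟩
  rw [maxminPVal_PstarOf hrep hA hfam hatt hxf hf, ← hPval, hrep.maxminPVal_eq hA hfam hxf hf]

theorem PRep.congr {Pfam' : Set (Set (Set S → ℝ))} (hrep : PRep 𝓐 X R u Pfam)
    (h : ∀ f ∈ Acts 𝓐 X, maxminPVal Pfam' (uAct u f) = maxminPVal Pfam (uAct u f)) :
    PRep 𝓐 X R u Pfam' := by
  intro f hf g hg
  rw [hrep f hf g hg, h f hf, h g hg]

end Representation

theorem stmt6_general {S V : Type*} [Nonempty S]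
    (𝓐 : Set (Set S)) (hA : IsSetAlg 𝓐)
    (X : Set V)
    (R : (S → V) → (S → V) → Prop)
    (u : V → ℝ)
    (hrep : ∃ Pfam : Set (Set (Set S → ℝ)), IsPriorFamily 𝓐 Pfam ∧
      PAttained 𝓐 X u Pfam ∧ PRep 𝓐 X R u Pfam)
    (xf : (S → V) → V) (hxf : IsCE 𝓐 X R xf) :
    (∀ f ∈ Acts 𝓐 X,
      maxminPVal (PstarOf 𝓐 X u xf) (uAct u f) = (u (xf f) : EReal)) ∧
    PAttained 𝓐 X u (PstarOf 𝓐 X u xf) ∧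
    PRep 𝓐 X R u (PstarOf 𝓐 X u xf) ∧
    ∀ Pfam : Set (Set (Set S → ℝ)), IsPriorFamily 𝓐 Pfam → PAttained 𝓐 X u Pfam →
      PRep 𝓐 X R u Pfam → Pfam ⊆ PstarOf 𝓐 X u xf := by
  obtain ⟨Pfam, hfam, hatt, hrep⟩ := hrep
  have hval f (hf : f ∈ Acts 𝓐 X) := maxminPVal_PstarOf hrep hA hfam hatt hxf hf
  refine ⟨hval, pAttained_PstarOf hrep hA hfam hatt hxf, hrep.congr fun f hf => ?_,
    fun Pfam' hfam' _ hrep' => hrep'.subset_PstarOf hA hfam' hxf⟩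
  rw [hval f hf, hrep.maxminPVal_eq hA hfam hxf hf]

theorem stmt6 {S V : Type*} [Nonempty S] [AddCommGroup V] [Module ℝ V]
    (𝓐 : Set (Set S)) (hA : IsSetAlg 𝓐)
    (X : Set V) (hX : X.Nonempty) (hXc : Convex ℝ X)
    (R : (S → V) → (S → V) → Prop) (hpref : IBPref 𝓐 X R)
    (u : V → ℝ) (hu : IsNonconstAffine X u) (h0 : (0 : ℝ) ∈ interior (u '' X))
    (hrep : ∃ Pfam : Set (Set (Set S → ℝ)), IsPriorFamily 𝓐 Pfam ∧
      PAttained 𝓐 X u Pfam ∧ PRep 𝓐 X R u Pfam)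
    (xf : (S → V) → V) (hxf : IsCE 𝓐 X R xf) :
    (∀ f ∈ Acts 𝓐 X,
      maxminPVal (PstarOf 𝓐 X u xf) (uAct u f) = (u (xf f) : EReal)) ∧
    PAttained 𝓐 X u (PstarOf 𝓐 X u xf) ∧
    PRep 𝓐 X R u (PstarOf 𝓐 X u xf) ∧
    ∀ Pfam : Set (Set (Set S → ℝ)), IsPriorFamily 𝓐 Pfam → PAttained 𝓐 X u Pfam →
      PRep 𝓐 X R u Pfam → Pfam ⊆ PstarOf 𝓐 X u xf :=
  stmt6_general 𝓐 hA X R u hrep xf hxf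

end Paper
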